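/- Let f, φ : (0, ∞) → ℝ be smooth with f > 0, and suppose for constants λ, m (m ≠ 0) the one-dimensional analogues of the soliton equations hold: φ'' = λ + (m/f) f'' and 2λφ − (φ')² + φ'' + (m/f) φ' f' = c. Then the function λ f² + f f'' + (m−1)(f')² − f φ' f' is constant. -/

import Mathlib

open Set

/-- Let `f, φ : (0, ∞) → ℝ` be smooth with `f > 0`, satisfying the
one-dimensional soliton equations `φ'' = λ + (m/f) f''` and
`2λφ − (φ')² + φ'' + (m/f) φ' f' = c` for constants `λ, m, c` with `m ≠ 0`. Then
`λ f² + f f'' + (m−1)(f')² − f φ' f'` is constant on `(0, ∞)`. -/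
theorem one_dimensional_mu_constant (f φ : ℝ → ℝ) (lam m c : ℝ) (hm : m ≠ 0)
    (hf : ContDiffOn ℝ (⊤ : ℕ∞) f (Ioi 0)) (hφ : ContDiffOn ℝ (⊤ : ℕ∞) φ (Ioi 0))
    (hfpos : ∀ t ∈ Ioi (0 : ℝ), 0 < f t)
    (heq1 : ∀ t ∈ Ioi (0 : ℝ),
      deriv (deriv φ) t = lam + (m / f t) * deriv (deriv f) t)
    (heq2 : ∀ t ∈ Ioi (0 : ℝ),
      2 * lam * φ t - (deriv φ t) ^ 2 + deriv (deriv φ) t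
        + (m / f t) * deriv φ t * deriv f t = c) :
    ∃ μ : ℝ, ∀ t ∈ Ioi (0 : ℝ),
      lam * (f t) ^ 2 + f t * deriv (deriv f) t + (m - 1) * (deriv f t) ^ 2
        - f t * deriv φ t * deriv f t = μ := by
  have hs : IsOpen (Ioi (0:ℝ)) := isOpen_Ioi
  set F : ℝ → ℝ := fun t =>
    lam * (f t) ^ 2 + f t * deriv (deriv f) t + (m - 1) * (deriv f t) ^ 2
      - f t * deriv φ t * deriv f t with hFdef
  -- smoothness of derivatives
  have hf1 : ContDiffOn ℝ (⊤ : ℕ∞) (deriv f) (Ioi 0) := hf.deriv_of_isOpen hs (by simp)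
  have hf2 : ContDiffOn ℝ (⊤ : ℕ∞) (deriv (deriv f)) (Ioi 0) := hf1.deriv_of_isOpen hs (by simp)
  have hφ1 : ContDiffOn ℝ (⊤ : ℕ∞) (deriv φ) (Ioi 0) := hφ.deriv_of_isOpen hs (by simp)
  have hφ2 : ContDiffOn ℝ (⊤ : ℕ∞) (deriv (deriv φ)) (Ioi 0) := hφ1.deriv_of_isOpen hs (by simp)
  have key : ∀ t ∈ Ioi (0:ℝ), HasDerivAt F 0 t := by
    intro t ht
    have hmem : Ioi (0:ℝ) ∈ nhds t := hs.mem_nhds ht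
    have ha : f t ≠ 0 := ne_of_gt (hfpos t ht)
    -- differentiability at t
    have Df : HasDerivAt f (deriv f t) t :=
      ((hf.differentiableOn (by simp)).differentiableAt hmem).hasDerivAt
    have Df1 : HasDerivAt (deriv f) (deriv (deriv f) t) t :=
      ((hf1.differentiableOn (by simp)).differentiableAt hmem).hasDerivAt
    have Df2 : HasDerivAt (deriv (deriv f)) (deriv (deriv (deriv f)) t) t :=
      ((hf2.differentiableOn (by simp)).differentiableAt hmem).hasDerivAt
    have Dφ : HasDerivAt φ (deriv φ t) t :=
      ((hφ.differentiableOn (by simp)).differentiableAt hmem).hasDerivAt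
    have Dφ1 : HasDerivAt (deriv φ) (deriv (deriv φ) t) t :=
      ((hφ1.differentiableOn (by simp)).differentiableAt hmem).hasDerivAt
    have Dφ2 : HasDerivAt (deriv (deriv φ)) (deriv (deriv (deriv φ)) t) t :=
      ((hφ2.differentiableOn (by simp)).differentiableAt hmem).hasDerivAt
    set a := f t
    set b := deriv f t
    set c2 := deriv (deriv f) t
    set d := deriv (deriv (deriv f)) t
    set q := deriv φ t
    set r := deriv (deriv φ) t
    set s := deriv (deriv (deriv φ)) t
    -- E1 at t
    have hE1 : r = lam + m / a * c2 := heq1 t ht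
    -- derivative of E1 : s = derivative of (lam + (m * f'')/f)
    have hG1 : HasDerivAt (fun u => lam + m * deriv (deriv f) u / f u)
        ((m * d * a - m * c2 * b) / a ^ 2) t := by
      have := ((Df2.const_mul m).div Df ha).const_add lam
      simpa using this
    have hA : s = (m * d * a - m * c2 * b) / a ^ 2 := by
      refine Dφ2.unique (hG1.congr_of_eventuallyEq ?_)
      filter_upwards [hmem] with u hu
      rw [heq1 u hu]; ring
    -- derivative of E2 : 0 = derivative of LHS
    have hG2 : HasDerivAt (fun u => 2 * lam * φ u - (deriv φ u) ^ 2 + deriv (deriv φ) u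
          + m * deriv φ u * deriv f u / f u)
        ((2 * lam) * q - (2 * q * r) + s
          + (((m * r) * b + (m * q) * c2) * a - m * q * b * b) / a ^ 2) t := by
      have h1 : HasDerivAt (fun u => m * deriv φ u * deriv f u)
          ((m * r) * b + (m * q) * c2) t := by
        exact ((Dφ1.const_mul m).mul Df1).congr_deriv (by ring)
      have := (((Dφ.const_mul (2 * lam)).sub (Dφ1.pow 2)).add Dφ2).add (h1.div Df ha)
      exact this.congr_deriv (by ring)
    have hB : (2 * lam) * q - (2 * q * r) + s
        + (((m * r) * b + (m * q) * c2) * a - m * q * b * b) / a ^ 2 = 0 := by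
      refine ((hasDerivAt_const t c).congr_of_eventuallyEq ?_).unique hG2 |>.symm
      filter_upwards [hmem] with u hu
      rw [← heq2 u hu]; ring
    -- derivative of F
    have hDF : HasDerivAt F
        (lam * (2 * a * b) + (b * c2 + a * d) + (m - 1) * (2 * b * c2)
          - ((b * q + a * r) * b + a * q * c2)) t := by
      have h1 : HasDerivAt (fun u => lam * (f u) ^ 2) (lam * (2 * a * b)) t := by
        have := (Df.pow 2).const_mul lam
        exact this.congr_deriv (by ring)
      have h2 : HasDerivAt (fun u => f u * deriv (deriv f) u) (b * c2 + a * d) t :=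
        Df.mul Df2
      have h3 : HasDerivAt (fun u => (m - 1) * (deriv f u) ^ 2)
          ((m - 1) * (2 * b * c2)) t := by
        have := (Df1.pow 2).const_mul (m - 1)
        exact this.congr_deriv (by ring)
      have h4 : HasDerivAt (fun u => f u * deriv φ u * deriv f u)
          ((b * q + a * r) * b + a * q * c2) t := (Df.mul Dφ1).mul Df1
      exact ((h1.add h2).add h3).sub h4
    have hzero : lam * (2 * a * b) + (b * c2 + a * d) + (m - 1) * (2 * b * c2)
          - ((b * q + a * r) * b + a * q * c2) = 0 := by
      have ha2 : a ^ 2 ≠ 0 := pow_ne_zero 2 ha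
      field_simp at hA hB hE1
      have hz : m * (lam * (2 * a * b) + (b * c2 + a * d) + (m - 1) * (2 * b * c2)
          - ((b * q + a * r) * b + a * q * c2)) = 0 := by
        linear_combination -hA + hB + (2*q*a - 2*m*b) * hE1
      exact (mul_eq_zero.mp hz).resolve_left hm
    rw [← hzero]
    exact hDF
  -- constancy on the convex open set
  have hdiffF : DifferentiableOn ℝ F (Ioi 0) := fun t ht =>
    ((key t ht).differentiableAt.differentiableWithinAt)
  refine ⟨F 1, fun t ht => ?_⟩
  have h1 : (1:ℝ) ∈ Ioi (0:ℝ) := by norm_num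
  have := (convex_Ioi (0:ℝ)).is_const_of_fderivWithin_eq_zero hdiffF
    (fun x hx => ?_) ht h1
  · exact this
  · have : fderivWithin ℝ F (Ioi 0) x = fderiv ℝ F x :=
      fderivWithin_of_isOpen hs hx
    rw [this]
    have hd := (key x hx).hasFDerivAt
    rw [hd.fderiv]
    ext
    simp
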